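/- arXiv:2409.09215 — 4 statements merged into one kernel-verified Lean document; each statement's English description precedes it below -/
import Mathlib

section
/- For every 0 < κ < 1 and every u > 0 one has the identity c₁(κ)·K_{(κ−1)/2}(u)·u^{(κ−1)/2} = c₂(κ)·(1 − θ_κ(u))·u^{κ−1}. (Representation (9) of Lemma 1: the Matérn-type spectral factor written through the function θ_κ.) -/
open Real MeasureTheory Filter

noncomputable def c1 (k : ℝ) : ℝ := (2:ℝ) ^ ((1 - k)/2) / (Real.sqrt π * Real.Gamma (k/2))

noncomputable def c2 (k : ℝ) : ℝ := 1 / (2 * Real.Gamma k * Real.cos (k * π / 2))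

/-- Modified Bessel function of the second kind:
`K ν z = (1/2) ∫₀^∞ s^(ν−1) exp(−(z/2)(s + 1/s)) ds`. -/
noncomputable def besselK (ν z : ℝ) : ℝ :=
  (1/2) * ∫ s in Set.Ioi (0:ℝ), s ^ (ν - 1) * Real.exp (-(z/2) * (s + 1/s))

/-- The function `θ_κ(u)` from Lemma 1. -/
noncomputable def theta (k u : ℝ) : ℝ :=
  Real.Gamma ((k+1)/2) *
    ((2:ℝ)^(k-1) * u^(1-k) / Real.Gamma ((3-k)/2)
      + ∑' m : ℕ, (u/2) ^ (2*((m:ℝ)+1) - k + 1) /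
          ((Nat.factorial (m+1)) * Real.Gamma (((m:ℝ)+1) + (3-k)/2))
      - ∑' m : ℕ, (u/2) ^ (2*((m:ℝ)+1)) /
          ((Nat.factorial (m+1)) * Real.Gamma (((m:ℝ)+1) + (k+1)/2)))

/-!
The substitution `s ↦ (u / 2) / s` turns `K_ν(u)` into `(u / 2) ^ ν / 2 * kIntegral (-ν) (u² / 4)`,
where `kIntegral μ x = ∫₀^∞ t ^ (μ - 1) e^{-t - x/t} dt`. For `0 < μ < 1`, both `kIntegral μ` and
the classical power series `kSeries μ` built from `I_{±μ}` solve the Volterra system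
`Φ_μ(x) = Γ(μ) - ∫₀ˣ s ^ (μ - 1) Φ_{1-μ}(s) ds`: the integral by Fubini, the series by termwise
integration and `Γ(μ) Γ(1 - μ) = π / sin (π μ)`. Iterating the homogeneous system bounds the
difference of two solutions by `M (x / (1 - μ)) ^ n / n!`, so they agree. For `μ = (1 - κ) / 2` the
series is `π / cos (κ π / 2)` times `(1 - θ_κ(u)) / Γ((κ + 1) / 2)`, and Legendre's duplication
formula matches the constants `c₁` and `c₂`.
-/

open Set
open scoped Nat

namespace BesselKRepresentation

lemma integral_rpow_Ioc {p x : ℝ} (hp : -1 < p) (hx : 0 ≤ x) :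
    ∫ s in Ioc (0:ℝ) x, s ^ p = x ^ (p + 1) / (p + 1) := by
  rw [← intervalIntegral.integral_of_le hx, integral_rpow (Or.inl hp),
    zero_rpow (by linarith : p + 1 ≠ 0), sub_zero]

lemma integrableOn_rpow_Ioc {p x : ℝ} (hp : -1 < p) (hx : 0 ≤ x) :
    IntegrableOn (fun s : ℝ => s ^ p) (Ioc 0 x) :=
  (intervalIntegrable_iff_integrableOn_Ioc_of_le hx).mp
    (intervalIntegral.intervalIntegrable_rpow' hp)

lemma abs_setIntegral_Ioc_le_of_abs_le_rpow {f : ℝ → ℝ} {c p y : ℝ} (hp : -1 < p)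
    (hy : 0 ≤ y)
    (hf : ∀ s ∈ Ioc (0:ℝ) y, |f s| ≤ c * s ^ p) :
    |∫ s in Ioc (0:ℝ) y, f s| ≤ c * (y ^ (p + 1) / (p + 1)) := by
  rw [← integral_rpow_Ioc hp hy, ← integral_const_mul]
  exact norm_integral_le_of_norm_le ((integrableOn_rpow_Ioc hp hy).const_mul c)
    (ae_restrict_of_forall_mem measurableSet_Ioc fun s hs => (norm_eq_abs _).trans_le (hf s hs))

lemma setIntegral_Ioi_eq_comp_div {c : ℝ} (hc : 0 < c) (g : ℝ → ℝ) :
    ∫ t in Ioi 0, g t = ∫ s in Ioi 0, c / s ^ 2 * g (c / s) := by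
  have himage : (fun s : ℝ => c / s) '' Ioi 0 = Ioi 0 := by
    ext t
    constructor
    · rintro ⟨s, hs : 0 < s, rfl⟩
      exact div_pos hc hs
    · intro (ht : 0 < t)
      exact ⟨c / t, div_pos hc ht, div_div_cancel₀ hc.ne'⟩
  have hderiv (s : ℝ) (hs : s ∈ Ioi 0) :
      HasDerivWithinAt (fun s => c / s) (-(c / s ^ 2)) (Ioi 0) s := by
    simpa [div_eq_mul_inv] using ((hasDerivAt_inv (ne_of_gt hs)).const_mul c).hasDerivWithinAt
  have hinj : InjOn (fun s : ℝ => c / s) (Ioi 0) := fun s _ t _ h => by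
    simp only [div_eq_mul_inv] at h
    exact inv_injective (mul_left_cancel₀ hc.ne' h)
  calc ∫ t in Ioi 0, g t = ∫ t in (fun s => c / s) '' Ioi 0, g t := by rw [himage]
    _ = _ := by
      rw [integral_image_eq_integral_abs_deriv_smul measurableSet_Ioi hderiv hinj g]
      refine setIntegral_congr_fun measurableSet_Ioi fun s (hs : 0 < s) => ?_
      rw [smul_eq_mul, abs_neg, abs_of_pos (by positivity)]

/-- `kIntegral μ (u ^ 2 / 4) = 2 (u / 2) ^ μ K_μ(u)`. -/
noncomputable def kIntegral (μ x : ℝ) : ℝ :=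
  ∫ t in Ioi (0:ℝ), t ^ (μ - 1) * exp (-t - x / t)

lemma integrableOn_kIntegral_integrand {μ x : ℝ} (hμ : 0 < μ) (hx : 0 ≤ x) :
    IntegrableOn (fun t : ℝ => t ^ (μ - 1) * exp (-t - x / t)) (Ioi 0) := by
  refine (GammaIntegral_convergent hμ).mono' (by fun_prop)
    (ae_restrict_of_forall_mem measurableSet_Ioi fun t (ht : 0 < t) => ?_)
  rw [norm_of_nonneg (by positivity), mul_comm]
  gcongr
  linarith [div_nonneg hx ht.le]

lemma kIntegral_zero {μ : ℝ} (hμ : 0 < μ) : kIntegral μ 0 = Gamma μ := by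
  simp only [kIntegral, Gamma_eq_integral hμ, zero_div, sub_zero, mul_comm]

lemma kIntegral_nonneg (μ x : ℝ) : 0 ≤ kIntegral μ x :=
  setIntegral_nonneg measurableSet_Ioi fun t (ht : 0 < t) => by positivity

lemma kIntegral_le_Gamma {μ x : ℝ} (hμ : 0 < μ) (hx : 0 ≤ x) :
    kIntegral μ x ≤ Gamma μ := by
  rw [← kIntegral_zero hμ]
  refine setIntegral_mono_on (integrableOn_kIntegral_integrand hμ hx)
    (integrableOn_kIntegral_integrand hμ le_rfl) measurableSet_Ioi fun t (ht : 0 < t) => ?_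
  gcongr

lemma measurable_kIntegral (μ : ℝ) : Measurable (kIntegral μ) :=
  (StronglyMeasurable.integral_prod_right
    (f := fun x t : ℝ => t ^ (μ - 1) * exp (-t - x / t))
    (by fun_prop : Measurable _).stronglyMeasurable).measurable

lemma kIntegral_eq_rpow_mul_kIntegral_neg (μ : ℝ) {x : ℝ} (hx : 0 < x) :
    kIntegral μ x = x ^ μ * kIntegral (-μ) x := by
  rw [kIntegral, setIntegral_Ioi_eq_comp_div hx, kIntegral, ← integral_const_mul]
  refine setIntegral_congr_fun measurableSet_Ioi fun s (hs : 0 < s) => ?_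
  have hexp : -(x / s) - x / (x / s) = -s - x / s := by field_simp; ring
  rw [hexp, div_rpow hx.le hs.le, rpow_sub_one hx.ne', rpow_sub_one hs.ne', rpow_sub_one hs.ne',
    rpow_neg hs.le]
  field_simp

lemma integral_exp_neg_div_Ioc {t x : ℝ} (ht : 0 < t) (hx : 0 ≤ x) :
    ∫ s in Ioc 0 x, exp (-(s / t)) = t * (1 - exp (-(x / t))) := by
  rw [← intervalIntegral.integral_of_le hx,
    intervalIntegral.integral_comp_div (fun s => exp (-s)) ht.ne']
  simp

/-- Since `∂ₓ (t ^ (μ - 1) e^{-t-x/t}) = -t ^ (μ - 2) e^{-t-x/t}`, Fubini gives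
`∂ₓ kIntegral μ x = -kIntegral (μ - 1) x = -x ^ (μ - 1) kIntegral (1 - μ) x`. -/
lemma kIntegral_volterra {μ x : ℝ} (hμ : 0 < μ) (hx : 0 ≤ x) :
    kIntegral μ x = Gamma μ - ∫ s in Ioc 0 x, s ^ (μ - 1) * kIntegral (1 - μ) s := by
  set g : ℝ → ℝ → ℝ := fun x t => t ^ (μ - 1) * exp (-t - x / t)
  set f : ℝ → ℝ → ℝ := fun t s => t ^ (μ - 2) * exp (-t - s / t)
  have hinner (t : ℝ) (ht : t ∈ Ioi 0) : ∫ s in Ioc 0 x, f t s = g 0 t - g x t := by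
    have ht : 0 < t := ht
    have hsplit (s : ℝ) : f t s = t ^ (μ - 2) * exp (-t) * exp (-(s / t)) := by
      rw [mul_assoc, ← exp_add, ← sub_eq_add_neg]
    have hpow : t ^ (μ - 1) = t ^ (μ - 2) * t := by
      rw [← rpow_add_one ht.ne']
      ring_nf
    simp_rw [hsplit]
    rw [integral_const_mul, integral_exp_neg_div_Ioc ht hx]
    simp only [g]
    rw [zero_div, sub_zero, sub_eq_add_neg (-t), exp_add, hpow]
    ring
  have hint : Integrable (Function.uncurry f)
      ((volume.restrict (Ioi 0)).prod (volume.restrict (Ioc 0 x))) := by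
    refine (integrable_prod_iff (by fun_prop)).mpr ⟨?_, ?_⟩
    · exact ae_restrict_of_forall_mem measurableSet_Ioi fun t (ht : 0 < t) =>
        (by fun_prop : Continuous (f t)).integrableOn_Ioc
    · refine ((integrableOn_kIntegral_integrand hμ le_rfl).sub
        (integrableOn_kIntegral_integrand hμ hx)).congr
        (ae_restrict_of_forall_mem measurableSet_Ioi fun t ht => ?_)
      rw [Pi.sub_apply, ← hinner t ht]
      refine setIntegral_congr_fun measurableSet_Ioc fun s _ => ?_
      have : 0 < t := ht
      exact (norm_of_nonneg (by positivity)).symm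
  calc kIntegral μ x = kIntegral μ 0 - ∫ t in Ioi 0, (g 0 t - g x t) := by
        rw [integral_sub (integrableOn_kIntegral_integrand hμ le_rfl)
          (integrableOn_kIntegral_integrand hμ hx)]
        exact (sub_sub_cancel _ _).symm
    _ = Gamma μ - ∫ s in Ioc 0 x, ∫ t in Ioi 0, f t s := by
        rw [kIntegral_zero hμ, ← setIntegral_congr_fun measurableSet_Ioi hinner,
          integral_integral_swap hint]
    _ = Gamma μ - ∫ s in Ioc 0 x, s ^ (μ - 1) * kIntegral (1 - μ) s := by
        congr 1
        refine setIntegral_congr_fun measurableSet_Ioc fun s hs => ?_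
        rw [← neg_sub μ 1, ← kIntegral_eq_rpow_mul_kIntegral_neg _ hs.1]
        simp only [f, kIntegral, sub_sub, one_add_one_eq_two]

lemma integrableOn_rpow_mul_kIntegral_one_sub {μ x : ℝ} (hμ0 : 0 < μ) (hμ1 : μ < 1)
    (hx : 0 ≤ x) : IntegrableOn (fun s => s ^ (μ - 1) * kIntegral (1 - μ) s) (Ioc 0 x) := by
  refine ((integrableOn_rpow_Ioc (p := μ - 1) (by linarith) hx).mul_const (Gamma (1 - μ))).mono'
    ((by fun_prop : Measurable fun s : ℝ => s ^ (μ - 1)).mul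
      (measurable_kIntegral _)).aestronglyMeasurable
    (ae_restrict_of_forall_mem measurableSet_Ioc fun s hs => ?_)
  rw [norm_of_nonneg (mul_nonneg (rpow_nonneg hs.1.le _) (kIntegral_nonneg _ _))]
  exact mul_le_mul_of_nonneg_left (kIntegral_le_Gamma (sub_pos.mpr hμ1) hs.1.le)
    (rpow_nonneg hs.1.le _)

/-- `iSeries a (u ^ 2 / 4) = (u / 2) ^ (-a) I_a(u)`. -/
noncomputable def iSeries (a x : ℝ) : ℝ :=
  ∑' m : ℕ, x ^ m / (m ! * Gamma (m + 1 + a))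

lemma summable_iSeries (a x : ℝ) :
    Summable fun m : ℕ => x ^ m / (m ! * Gamma (m + 1 + a)) := by
  refine (Real.summable_pow_div_factorial |x|).of_norm_bounded_eventually_nat ?_
  filter_upwards [eventually_ge_atTop ⌈1 - a⌉₊] with m hm
  have h2 : (2:ℝ) ≤ m + 1 + a := by linarith [(Nat.ceil_le.mp hm)]
  have hΓ : 1 ≤ Gamma (m + 1 + a) := calc
    (1:ℝ) = Gamma 2 := Gamma_two.symm
    _ ≤ Gamma (m + 1 + a) := Gamma_strictMonoOn_Ici.monotoneOn (mem_Ici.mpr le_rfl) h2 h2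
  rw [norm_div, norm_mul, norm_pow, norm_of_nonneg (Gamma_pos_of_pos (by linarith)).le,
    Real.norm_natCast, Real.norm_eq_abs]
  gcongr
  exact le_mul_of_one_le_right (Nat.cast_nonneg _) hΓ

lemma iSeries_zero (a : ℝ) : iSeries a 0 = (Gamma (1 + a))⁻¹ := by
  rw [iSeries, tsum_eq_single 0 fun m hm => by rw [zero_pow hm, zero_div]]
  simp

lemma iSeries_eq_inv_Gamma_add_tsum (a x : ℝ) :
    iSeries a x = (Gamma (1 + a))⁻¹ +
      ∑' m : ℕ, x ^ (m + 1) / ((m + 1)! * Gamma (m + 1 + (a + 1))) := by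
  rw [iSeries, (summable_iSeries a x).tsum_eq_zero_add]
  simp only [pow_zero, Nat.factorial_zero, Nat.cast_zero, zero_add, one_mul, one_div,
    Nat.cast_add_one]
  congr 1
  refine tsum_congr fun m => ?_
  ring_nf

lemma natCast_add_one_add_pos {a : ℝ} (ha : -1 < a) (m : ℕ) : 0 < (m : ℝ) + 1 + a := by
  linarith [(Nat.cast_nonneg m : (0:ℝ) ≤ m)]

lemma iSeries_term_nonneg {a x : ℝ} (ha : -1 < a) (hx : 0 ≤ x) (m : ℕ) :
    0 ≤ x ^ m / (m ! * Gamma (m + 1 + a)) := by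
  have := Gamma_pos_of_pos (natCast_add_one_add_pos ha m)
  positivity

lemma iSeries_nonneg {a x : ℝ} (ha : -1 < a) (hx : 0 ≤ x) : 0 ≤ iSeries a x :=
  tsum_nonneg (iSeries_term_nonneg ha hx)

lemma iSeries_monotoneOn {a : ℝ} (ha : -1 < a) : MonotoneOn (iSeries a) (Ici 0) :=
  fun x (hx : 0 ≤ x) y _ hxy => (summable_iSeries a x).tsum_le_tsum (fun m => by
    have := Gamma_pos_of_pos (natCast_add_one_add_pos ha m)
    gcongr) (summable_iSeries a y)

lemma measurable_iSeries (a : ℝ) : Measurable (iSeries a) :=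
  Measurable.tsum fun m => by fun_prop

lemma integrableOn_rpow_mul_iSeries {p a x : ℝ} (hp : -1 < p) (ha : -1 < a) (hx : 0 ≤ x) :
    IntegrableOn (fun s => s ^ p * iSeries a s) (Ioc 0 x) := by
  refine ((integrableOn_rpow_Ioc hp hx).mul_const (iSeries a x)).mono' 
    ((by fun_prop : Measurable fun s : ℝ => s ^ p).mul
      (measurable_iSeries a)).aestronglyMeasurable
    (ae_restrict_of_forall_mem measurableSet_Ioc fun s hs => ?_)
  rw [norm_of_nonneg (mul_nonneg (rpow_nonneg hs.1.le _) (iSeries_nonneg ha hs.1.le))]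
  exact mul_le_mul_of_nonneg_left (iSeries_monotoneOn ha hs.1.le hx hs.2) (rpow_nonneg hs.1.le _)

lemma integrableOn_iSeries {a x : ℝ} (ha : -1 < a) (hx : 0 ≤ x) :
    IntegrableOn (iSeries a) (Ioc 0 x) := by
  simpa using integrableOn_rpow_mul_iSeries (p := 0) (by norm_num) ha hx

lemma integral_tsum_mul_rpow {c : ℕ → ℝ} {p x : ℝ} (hp : -1 < p) (hx : 0 ≤ x)
    (hc : Summable fun m => |c m| * x ^ m) :
    ∫ s in Ioc 0 x, ∑' m : ℕ, c m * s ^ (p + m)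
      = ∑' m : ℕ, c m * (x ^ (p + m + 1) / (p + m + 1)) := by
  have hpm (m : ℕ) : -1 < p + m := by linarith [(Nat.cast_nonneg m : (0:ℝ) ≤ m)]
  have hint (m : ℕ) : IntegrableOn (fun s => c m * s ^ (p + m)) (Ioc 0 x) :=
    (integrableOn_rpow_Ioc (hpm m) hx).const_mul _
  have hnorm (m : ℕ) :
      ∫ s in Ioc 0 x, ‖c m * s ^ (p + m)‖ = |c m| * (x ^ (p + m + 1) / (p + m + 1)) := by
    rw [← integral_rpow_Ioc (hpm m) hx, ← integral_const_mul]
    refine setIntegral_congr_fun measurableSet_Ioc fun s hs => ?_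
    rw [norm_mul, norm_of_nonneg (rpow_nonneg hs.1.le _), Real.norm_eq_abs]
  have hbound (m : ℕ) :
      |c m| * (x ^ (p + m + 1) / (p + m + 1)) ≤ x ^ (p + 1) / (p + 1) * (|c m| * x ^ m) := by
    have hm : p + 1 ≤ p + 1 + m := le_add_of_nonneg_right (Nat.cast_nonneg m)
    rw [add_right_comm, rpow_add' hx (by linarith), rpow_natCast]
    calc |c m| * (x ^ (p + 1) * x ^ m / (p + 1 + m))
        = |c m| * x ^ (p + 1) * x ^ m / (p + 1 + m) := by ring
      _ ≤ |c m| * x ^ (p + 1) * x ^ m / (p + 1) :=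
        div_le_div_of_nonneg_left (by positivity) (by linarith) hm
      _ = x ^ (p + 1) / (p + 1) * (|c m| * x ^ m) := by ring
  rw [← integral_tsum_of_summable_integral_norm hint]
  · exact tsum_congr fun m => by rw [integral_const_mul, integral_rpow_Ioc (hpm m) hx]
  · exact Summable.of_nonneg_of_le (fun m => integral_nonneg fun s => norm_nonneg _)
      (fun m => (hnorm m).trans_le (hbound m)) (hc.mul_left _)

lemma summable_abs_iSeries_coeff_mul_pow (a : ℝ) {x : ℝ} (hx : 0 ≤ x) :
    Summable fun m : ℕ => |(m ! * Gamma (m + 1 + a))⁻¹| * x ^ m :=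
  (summable_iSeries a x).abs.congr fun m => by
    rw [abs_div, abs_of_nonneg (pow_nonneg hx m), div_eq_inv_mul, abs_inv]

lemma integral_rpow_mul_iSeries {a x : ℝ} (ha : -1 < a) (hx : 0 ≤ x) :
    ∫ s in Ioc 0 x, s ^ a * iSeries a s = x ^ (a + 1) * iSeries (a + 1) x := by
  have hterm (s : ℝ) (hs : s ∈ Ioc 0 x) : s ^ a * iSeries a s
      = ∑' m : ℕ, (m ! * Gamma (m + 1 + a))⁻¹ * s ^ (a + m) := by
    rw [iSeries, ← tsum_mul_left]
    refine tsum_congr fun m => ?_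
    rw [rpow_add hs.1, rpow_natCast]
    ring
  rw [setIntegral_congr_fun measurableSet_Ioc hterm,
    integral_tsum_mul_rpow ha hx (summable_abs_iSeries_coeff_mul_pow a hx), iSeries,
    ← tsum_mul_left]
  refine tsum_congr fun m => ?_
  have hm := natCast_add_one_add_pos ha m
  have hpow : x ^ (a + m + 1) = x ^ (a + 1) * x ^ m := by
    rw [add_right_comm, rpow_add' hx (by linarith), rpow_natCast]
  rw [show (m : ℝ) + 1 + (a + 1) = m + 1 + a + 1 by ring, Gamma_add_one hm.ne', hpow,
    show a + (m : ℝ) + 1 = m + 1 + a by ring]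
  have := Gamma_pos_of_pos hm
  field_simp

lemma integral_iSeries (a : ℝ) {x : ℝ} (hx : 0 ≤ x) :
    ∫ s in Ioc 0 x, iSeries (a + 1) s = iSeries a x - (Gamma (1 + a))⁻¹ := by
  have hterm (s : ℝ) : iSeries (a + 1) s
      = ∑' m : ℕ, (m ! * Gamma (m + 1 + (a + 1)))⁻¹ * s ^ ((0:ℝ) + m) := by
    refine tsum_congr fun m => ?_
    rw [zero_add, rpow_natCast, div_eq_inv_mul]
  simp_rw [hterm]
  rw [integral_tsum_mul_rpow neg_one_lt_zero hx (summable_abs_iSeries_coeff_mul_pow _ hx),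
    iSeries_eq_inv_Gamma_add_tsum, add_sub_cancel_left]
  refine tsum_congr fun m => ?_
  rw [zero_add, ← Nat.cast_add_one, rpow_natCast, Nat.factorial_succ]
  push_cast
  simp only [div_eq_mul_inv, mul_inv]
  ring

/-- `kSeries μ (u ^ 2 / 4) = (u / 2) ^ μ π (I_{-μ}(u) - I_μ(u)) / sin (π μ)`, the classical
series for `2 (u / 2) ^ μ K_μ(u)`. -/
noncomputable def kSeries (μ x : ℝ) : ℝ :=
  π / sin (π * μ) * (iSeries (-μ) x - x ^ μ * iSeries μ x)

lemma kSeries_zero {μ : ℝ} (hμ0 : 0 < μ) (hμ1 : μ < 1) : kSeries μ 0 = Gamma μ := by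
  rw [kSeries, zero_rpow hμ0.ne', zero_mul, sub_zero, iSeries_zero, ← sub_eq_add_neg,
    ← Gamma_mul_Gamma_one_sub]
  field_simp [(Gamma_pos_of_pos (sub_pos.mpr hμ1)).ne']

lemma rpow_mul_kSeries_one_sub (μ : ℝ) {s : ℝ} (hs : 0 < s) :
    s ^ (μ - 1) * kSeries (1 - μ) s
      = π / sin (π * μ) * (s ^ (μ - 1) * iSeries (μ - 1) s - iSeries (1 - μ) s) := by
  have hpow : s ^ (μ - 1) * s ^ (1 - μ) = 1 := by
    rw [← rpow_add hs, sub_add_sub_cancel', sub_self, rpow_zero]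
  rw [kSeries, mul_one_sub, sin_pi_sub, neg_sub]
  linear_combination (-(π / sin (π * μ)) * iSeries (1 - μ) s) * hpow

lemma integrableOn_rpow_mul_kSeries_one_sub {μ x : ℝ} (hμ0 : 0 < μ) (hμ1 : μ < 1)
    (hx : 0 ≤ x) : IntegrableOn (fun s => s ^ (μ - 1) * kSeries (1 - μ) s) (Ioc 0 x) := by
  exact IntegrableOn.congr_fun
    (((integrableOn_rpow_mul_iSeries (by linarith) (by linarith) hx).sub
      (integrableOn_iSeries (by linarith) hx)).const_mul _)
    (fun s hs => (rpow_mul_kSeries_one_sub μ hs.1).symm) measurableSet_Ioc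

lemma kSeries_volterra {μ x : ℝ} (hμ0 : 0 < μ) (hμ1 : μ < 1) (hx : 0 ≤ x) :
    kSeries μ x = Gamma μ - ∫ s in Ioc 0 x, s ^ (μ - 1) * kSeries (1 - μ) s := by
  have h1 := integral_rpow_mul_iSeries (a := μ - 1) (by linarith) hx
  have h2 := integral_iSeries (-μ) hx
  rw [sub_add_cancel] at h1
  rw [neg_add_eq_sub, ← sub_eq_add_neg] at h2
  rw [setIntegral_congr_fun measurableSet_Ioc fun s hs => rpow_mul_kSeries_one_sub μ hs.1,
    integral_const_mul, integral_sub (integrableOn_rpow_mul_iSeries (by linarith) (by linarith) hx)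
    (integrableOn_iSeries (by linarith) hx), h1, h2, kSeries, ← Gamma_mul_Gamma_one_sub]
  field_simp [(Gamma_pos_of_pos (sub_pos.mpr hμ1)).ne']
  ring

section Volterra

variable {μ X : ℝ} {d e : ℝ → ℝ}
  (hd : ∀ y ∈ Ioc 0 X, d y = -∫ s in Ioc 0 y, s ^ (μ - 1) * e s)
  (he : ∀ y ∈ Ioc 0 X, e y = -∫ s in Ioc 0 y, s ^ (-μ) * d s)
include hd he

lemma abs_le_of_volterra_of_abs_le_rpow (hμ : μ < 1) {C p : ℝ} (hp : 0 ≤ p)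
    (hbound : ∀ y ∈ Ioc 0 X, |d y| ≤ C * y ^ p) :
    ∀ y ∈ Ioc 0 X, |d y| ≤ C / (p - μ + 1) * (y ^ (p + 1) / (p + 1)) := by
  have he_bound (z : ℝ) (hz : z ∈ Ioc 0 X) :
      |e z| ≤ C * (z ^ (p - μ + 1) / (p - μ + 1)) := by
    rw [he z hz, abs_neg]
    refine abs_setIntegral_Ioc_le_of_abs_le_rpow (by linarith) hz.1.le fun s hs => ?_
    have hpow : s ^ (-μ) * s ^ p = s ^ (p - μ) := by rw [← rpow_add hs.1]; ring_nf
    rw [abs_mul, abs_of_nonneg (rpow_nonneg hs.1.le _), ← hpow, mul_left_comm]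
    exact mul_le_mul_of_nonneg_left (hbound s ⟨hs.1, hs.2.trans hz.2⟩) (rpow_nonneg hs.1.le _)
  intro y hy
  rw [hd y hy, abs_neg]
  refine abs_setIntegral_Ioc_le_of_abs_le_rpow (by linarith) hy.1.le fun s hs => ?_
  have hpow : s ^ (μ - 1) * s ^ (p - μ + 1) = s ^ p := by rw [← rpow_add hs.1]; ring_nf
  rw [abs_mul, abs_of_nonneg (rpow_nonneg hs.1.le _)]
  calc s ^ (μ - 1) * |e s| ≤ s ^ (μ - 1) * (C * (s ^ (p - μ + 1) / (p - μ + 1))) :=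
        mul_le_mul_of_nonneg_left (he_bound s ⟨hs.1, hs.2.trans hy.2⟩) (rpow_nonneg hs.1.le _)
    _ = C / (p - μ + 1) * s ^ p := by linear_combination C / (p - μ + 1) * hpow

lemma eq_zero_of_volterra (hμ : μ < 1)
    (he_int : IntegrableOn (fun s => s ^ (μ - 1) * e s) (Ioc 0 X)) :
    ∀ y ∈ Ioc 0 X, d y = 0 := by
  set M := ∫ s in Ioc 0 X, |s ^ (μ - 1) * e s|
  have hbound (n : ℕ) : ∀ y ∈ Ioc 0 X, |d y| ≤ M / (1 - μ) ^ n / n ! * y ^ (n : ℝ) := by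
    induction n with
    | zero =>
      intro y hy
      simp only [pow_zero, div_one, Nat.factorial_zero, Nat.cast_one, Nat.cast_zero, rpow_zero,
        mul_one]
      rw [hd y hy, abs_neg]
      exact abs_integral_le_integral_abs.trans (setIntegral_mono_set he_int.abs
        (ae_of_all _ fun s => abs_nonneg _) (Ioc_subset_Ioc_right hy.2).eventuallyLE)
    | succ n ih =>
      intro y hy
      have hμn : 1 - μ ≤ n - μ + 1 := by linarith [(Nat.cast_nonneg n : (0:ℝ) ≤ n)]
      have hy0 : 0 ≤ y := hy.1.le
      refine (abs_le_of_volterra_of_abs_le_rpow hd he hμ (Nat.cast_nonneg n) ih y hy).trans ?_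
      calc M / (1 - μ) ^ n / n ! / (n - μ + 1) * (y ^ ((n : ℝ) + 1) / (n + 1))
          ≤ M / (1 - μ) ^ n / n ! / (1 - μ) * (y ^ ((n : ℝ) + 1) / (n + 1)) := by
            gcongr
        _ = M / (1 - μ) ^ (n + 1) / (n + 1)! * y ^ ((n + 1 : ℕ) : ℝ) := by
            rw [Nat.factorial_succ, pow_succ]
            push_cast
            field_simp
  intro y hy
  have hlim : Tendsto (fun n : ℕ => M * ((y / (1 - μ)) ^ n / n !)) atTop (nhds 0) := by
    simpa using (FloorSemiring.tendsto_pow_div_factorial_atTop (y / (1 - μ))).const_mul M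
  refine abs_nonpos_iff.mp (ge_of_tendsto' hlim fun n => (hbound n y hy).trans_eq ?_)
  rw [div_pow, rpow_natCast]
  ring

end Volterra

lemma kIntegral_eq_kSeries {μ x : ℝ} (hμ0 : 0 < μ) (hμ1 : μ < 1) (hx : 0 ≤ x) :
    kIntegral μ x = kSeries μ x := by
  rcases hx.eq_or_lt with rfl | hx
  · rw [kIntegral_zero hμ0, kSeries_zero hμ0 hμ1]
  have hdiff (ν y : ℝ) (hν0 : 0 < ν) (hν1 : ν < 1) (hy : 0 ≤ y) :
      kIntegral ν y - kSeries ν y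
        = -∫ s in Ioc 0 y, s ^ (ν - 1) * (kIntegral (1 - ν) s - kSeries (1 - ν) s) := by
    simp_rw [mul_sub]
    rw [kIntegral_volterra hν0 hy, kSeries_volterra hν0 hν1 hy, integral_sub
      (integrableOn_rpow_mul_kIntegral_one_sub hν0 hν1 hy)
      (integrableOn_rpow_mul_kSeries_one_sub hν0 hν1 hy)]
    ring
  have hint : IntegrableOn (fun s => s ^ (μ - 1) * (kIntegral (1 - μ) s - kSeries (1 - μ) s))
      (Ioc 0 x) := by
    simp_rw [mul_sub]
    exact (integrableOn_rpow_mul_kIntegral_one_sub hμ0 hμ1 hx.le).sub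
      (integrableOn_rpow_mul_kSeries_one_sub hμ0 hμ1 hx.le)
  refine sub_eq_zero.mp (eq_zero_of_volterra (fun y hy => hdiff μ y hμ0 hμ1 hy.1.le)
    (fun y hy => ?_) hμ1 hint x ⟨hx, le_rfl⟩)
  simpa only [sub_sub_cancel_left, sub_sub_cancel] using
    hdiff (1 - μ) y (sub_pos.mpr hμ1) (by linarith) hy.1.le

lemma besselK_eq_kIntegral (ν : ℝ) {u : ℝ} (hu : 0 < u) :
    besselK ν u = (u / 2) ^ ν / 2 * kIntegral (-ν) (u ^ 2 / 4) := by
  have hq : 0 < u / 2 := by positivity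
  rw [besselK, setIntegral_Ioi_eq_comp_div hq, kIntegral, ← integral_const_mul,
    ← integral_const_mul]
  refine setIntegral_congr_fun measurableSet_Ioi fun s (hs : 0 < s) => ?_
  have hexp : -(u / 2) * (u / 2 / s + 1 / (u / 2 / s)) = -s - u ^ 2 / 4 / s := by
    field_simp
    ring
  rw [hexp, div_rpow hq.le hs.le, rpow_sub_one hq.ne', rpow_sub_one hs.ne', rpow_sub_one hs.ne',
    rpow_neg hs.le]
  field_simp

lemma kSeries_one_sub_div_two_sq (k : ℝ) {q : ℝ} (hq : 0 ≤ q) :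
    kSeries ((1 - k) / 2) (q ^ 2) = π / cos (k * π / 2) *
      (iSeries ((k - 1) / 2) (q ^ 2) - q ^ (1 - k) * iSeries ((1 - k) / 2) (q ^ 2)) := by
  have hsq : (q ^ 2) ^ ((1 - k) / 2) = q ^ (1 - k) := by
    rw [← rpow_natCast, ← rpow_mul hq]
    ring_nf
  rw [kSeries, show π * ((1 - k) / 2) = π / 2 - k * π / 2 by ring, sin_pi_div_two_sub,
    show -((1 - k) / 2) = (k - 1) / 2 by ring, hsq]

lemma one_sub_theta {k u : ℝ} (hk : -1 < k) (hu : 0 < u) :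
    1 - theta k u = Gamma ((k + 1) / 2) *
      (iSeries ((k - 1) / 2) ((u / 2) ^ 2)
        - (u / 2) ^ (1 - k) * iSeries ((1 - k) / 2) ((u / 2) ^ 2)) := by
  have hq : 0 < u / 2 := by positivity
  have h1 : ∑' m : ℕ, (u / 2) ^ (2 * ((m : ℝ) + 1) - k + 1) /
        ((m + 1)! * Gamma (((m : ℝ) + 1) + (3 - k) / 2))
      = (u / 2) ^ (1 - k) * (iSeries ((1 - k) / 2) ((u / 2) ^ 2) - (Gamma ((3 - k) / 2))⁻¹) := by
    rw [iSeries_eq_inv_Gamma_add_tsum, show 1 + (1 - k) / 2 = (3 - k) / 2 by ring,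
      add_sub_cancel_left, ← tsum_mul_left]
    refine tsum_congr fun m => ?_
    rw [show 2 * ((m : ℝ) + 1) - k + 1 = (1 - k) + ((2 * (m + 1) : ℕ) : ℝ) by push_cast; ring,
      rpow_add hq, rpow_natCast, pow_mul,
      show (m : ℝ) + 1 + (3 - k) / 2 = m + 1 + ((1 - k) / 2 + 1) by ring]
    ring
  have h2 : ∑' m : ℕ, (u / 2) ^ (2 * ((m : ℝ) + 1)) /
        ((m + 1)! * Gamma (((m : ℝ) + 1) + (k + 1) / 2))
      = iSeries ((k - 1) / 2) ((u / 2) ^ 2) - (Gamma ((k + 1) / 2))⁻¹ := by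
    rw [iSeries_eq_inv_Gamma_add_tsum, show 1 + (k - 1) / 2 = (k + 1) / 2 by ring,
      add_sub_cancel_left]
    refine tsum_congr fun m => ?_
    rw [show 2 * ((m : ℝ) + 1) = ((2 * (m + 1) : ℕ) : ℝ) by push_cast; ring, rpow_natCast,
      pow_mul,
      show (m : ℝ) + 1 + (k + 1) / 2 = m + 1 + ((k - 1) / 2 + 1) by ring]
  have h3 : (2:ℝ) ^ (k - 1) * u ^ (1 - k) = (u / 2) ^ (1 - k) := by
    rw [div_rpow hu.le zero_le_two, div_eq_mul_inv, ← rpow_neg zero_le_two, neg_sub, mul_comm]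
  have hΓ : Gamma ((k + 1) / 2) ≠ 0 := (Gamma_pos_of_pos (by linarith)).ne'
  rw [theta, h1, h2, h3]
  field_simp
  ring

lemma c1_mul_eq_c2_mul {k : ℝ} (hk0 : 0 < k) (hk1 : k < 1) :
    c1 k * 2 ^ ((1 - k) / 2) * π / (2 * cos (k * π / 2)) = c2 k * Gamma ((k + 1) / 2) := by
  have hcos : 0 < cos (k * π / 2) :=
    cos_pos_of_mem_Ioo ⟨by nlinarith [pi_pos], by nlinarith [pi_pos]⟩
  have hdup := Gamma_mul_Gamma_add_half (k / 2)
  rw [show k / 2 + 1 / 2 = (k + 1) / 2 by ring, show 2 * (k / 2) = k by ring] at hdup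
  have hpow : (2:ℝ) ^ ((1 - k) / 2) * 2 ^ ((1 - k) / 2) = 2 ^ (1 - k) := by
    rw [← rpow_add two_pos]
    ring_nf
  have hπ := mul_self_sqrt pi_pos.le
  rw [c1, c2]
  field_simp
  linear_combination (Gamma k * π) * hpow - √π * hdup - (Gamma k * 2 ^ (1 - k)) * hπ

end BesselKRepresentation

open BesselKRepresentation in
theorem lemma1_representation (k : ℝ) (hk0 : 0 < k) (hk1 : k < 1) (u : ℝ) (hu : 0 < u) :
    c1 k * besselK ((k-1)/2) u * u ^ ((k-1)/2)
      = c2 k * (1 - theta k u) * u ^ (k-1) := by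
  have hpow : (u / 2) ^ ((k - 1) / 2) * u ^ ((k - 1) / 2) = 2 ^ ((1 - k) / 2) * u ^ (k - 1) := by
    have hsum : u ^ ((k - 1) / 2) * u ^ ((k - 1) / 2) = u ^ (k - 1) := by
      rw [← rpow_add hu]
      ring_nf
    rw [div_rpow hu.le zero_le_two, show (1 - k) / 2 = -((k - 1) / 2) by ring,
      rpow_neg zero_le_two]
    linear_combination (2 ^ ((k - 1) / 2) : ℝ)⁻¹ * hsum
  rw [besselK_eq_kIntegral _ hu, show u ^ 2 / 4 = (u / 2) ^ 2 by ring,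
    show -((k - 1) / 2) = (1 - k) / 2 by ring,
    kIntegral_eq_kSeries (by linarith) (by linarith) (by positivity),
    kSeries_one_sub_div_two_sq k (by positivity), one_sub_theta (by linarith) hu]
  set D := iSeries ((k - 1) / 2) ((u / 2) ^ 2)
    - (u / 2) ^ (1 - k) * iSeries ((1 - k) / 2) ((u / 2) ^ 2)
  linear_combination (c1 k * π / (2 * cos (k * π / 2)) * D) * hpow
    + (D * u ^ (k - 1)) * c1_mul_eq_c2_mul hk0 hk1
end

section
/- For every 0 < κ < 1 the function θ_κ is bounded on [0,∞): there exists M > 0 such that |θ_κ(u)| ≤ M for all u ≥ 0. (Part of Lemma 1; the proof uses the integral representation K_{(κ−1)/2}(u)·u^{(1−κ)/2} = (√π/(2^{(κ−1)/2}Γ(κ/2)))·∫₁^∞ e^{−ut}(t²−1)^{κ/2−1} dt.) -/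
open Real MeasureTheory Filter

/-!
Write `ν = (1 - κ) / 2` and `z = (u / 2) ^ 2`. The two series in `θ_κ` are those of the modified
Bessel functions `I_{±ν}`, and `θ_κ(u) = 1 - G_ν(z) / Γ(ν)` where
`G_ν(z) = ∫₀^∞ t^(ν-1) e^(-t-z/t) dt = 2 (u/2)^ν K_ν(u)`. Since `0 ≤ G_ν(z) ≤ G_ν(0) = Γ(ν)`,
`θ_κ` takes values in `[0, 1]`.

The identity between `G_ν` and its series expression is proved by uniqueness: both the integrals
`(G_ν, G_{1-ν})` and the series solve `f' = -z^(ν-1) g`, `g' = -z^(-ν) f` on `z > 0` with the same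
values at `z = 0`. The coefficients are integrable at `0`, so the difference of the two solutions
vanishes near `0` by a contraction estimate, and then everywhere by Grönwall's inequality.
-/

open Set Topology
open scoped Nat

section BesselSeries

variable {a : ℝ}

/-- `I_ν(u) = (u / 2) ^ ν * besselSeries (ν + 1) ((u / 2) ^ 2)`. -/
noncomputable def besselSeries (a z : ℝ) : ℝ := ∑' m : ℕ, z ^ m / (m ! * Gamma (m + a))

lemma Gamma_mul_min_pow_le_Gamma_nat_add (ha : 0 < a) (m : ℕ) :
    Gamma a * min a 1 ^ m ≤ Gamma (m + a) := by
  induction m with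
  | zero => simp
  | succ m ih =>
    have hma : min a 1 ≤ m + a := by
      rcases m.eq_zero_or_pos with rfl | hm
      · simp
      · have : (1 : ℝ) ≤ m := by exact_mod_cast hm
        linarith [min_le_right a 1]
    calc Gamma a * min a 1 ^ (m + 1) = min a 1 * (Gamma a * min a 1 ^ m) := by ring
      _ ≤ (m + a) * Gamma (m + a) := by gcongr
      _ = Gamma ((m + 1 : ℕ) + a) := by
        rw [← Gamma_add_one (by positivity)]; push_cast; ring_nf

lemma abs_div_factorial_mul_Gamma_le (ha : 0 < a) {c C : ℝ} {m : ℕ} (hc : |c| ≤ C ^ m) :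
    |c / (m ! * Gamma (m + a))| ≤ (C / min a 1) ^ m / m ! / Gamma a := by
  have hb : 0 < min a 1 := lt_min ha one_pos
  have hΓ := Gamma_pos_of_pos ha
  have hΓm := Gamma_pos_of_pos (by positivity : 0 < m + a)
  have hd : 0 < m ! * Gamma (m + a) := by positivity
  have hfactor : 0 ≤ (C / min a 1) ^ m / m ! / Gamma a := by
    rw [div_pow]; have := (abs_nonneg c).trans hc; positivity
  rw [abs_div, abs_of_pos hd, div_le_iff₀ hd]
  calc |c| ≤ C ^ m := hc
    _ = (C / min a 1) ^ m / m ! / Gamma a * (m ! * (Gamma a * min a 1 ^ m)) := by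
      rw [div_pow]; field_simp
    _ ≤ (C / min a 1) ^ m / m ! / Gamma a * (m ! * Gamma (m + a)) := by
      gcongr; exact Gamma_mul_min_pow_le_Gamma_nat_add ha m

lemma summable_besselSeries_majorant (a C : ℝ) :
    Summable fun m : ℕ => (C / min a 1) ^ m / m ! / Gamma a :=
  (Real.summable_pow_div_factorial _).div_const _

lemma summable_besselSeries (ha : 0 < a) (z : ℝ) :
    Summable fun m : ℕ => z ^ m / (m ! * Gamma (m + a)) :=
  .of_norm_bounded (summable_besselSeries_majorant a |z|)
    fun _ => abs_div_factorial_mul_Gamma_le ha (abs_pow z _).le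

lemma besselSeries_zero (a : ℝ) : besselSeries a 0 = (Gamma a)⁻¹ := by
  rw [besselSeries, tsum_eq_single 0 fun m hm => by simp [zero_pow hm]]
  simp

lemma besselSeries_sub_inv_Gamma (ha : 0 < a) (z : ℝ) :
    besselSeries a z - (Gamma a)⁻¹ =
      ∑' m : ℕ, z ^ (m + 1) / ((m + 1)! * Gamma ((m : ℝ) + 1 + a)) := by
  rw [besselSeries, (summable_besselSeries ha z).tsum_eq_zero_add]
  simp

lemma hasSum_besselSeries_deriv (ha : 0 < a) (z : ℝ) :
    HasSum (fun m : ℕ => m * z ^ (m - 1) / (m ! * Gamma (m + a))) (besselSeries (a + 1) z) := by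
  rw [← hasSum_nat_add_iff' 1]
  simp only [Finset.range_one, Finset.sum_singleton, Nat.cast_zero, zero_mul, zero_div, sub_zero,
    Nat.add_sub_cancel]
  have hterm : (fun m : ℕ => ((m + 1 : ℕ) : ℝ) * z ^ m / ((m + 1)! * Gamma ((m + 1 : ℕ) + a)))
      = fun m : ℕ => z ^ m / (m ! * Gamma (m + (a + 1))) := by
    funext m
    rw [Nat.factorial_succ]
    push_cast
    rw [show (m : ℝ) + 1 + a = m + (a + 1) by ring]
    field_simp
  rw [hterm]
  exact (summable_besselSeries (by linarith) z).hasSum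

lemma hasDerivAt_besselSeries (ha : 0 < a) (z : ℝ) :
    HasDerivAt (besselSeries a) (besselSeries (a + 1) z) z := by
  set R := |z| + 1
  have hR : 1 ≤ R := by simp [R]
  have hderiv_le : ∀ (m : ℕ) (y : ℝ), y ∈ Metric.ball 0 R →
      ‖m * y ^ (m - 1) / (m ! * Gamma (m + a))‖ ≤ (2 * R / min a 1) ^ m / m ! / Gamma a := by
    intro m y hy
    rw [mem_ball_zero_iff, Real.norm_eq_abs] at hy
    refine abs_div_factorial_mul_Gamma_le ha ?_
    rw [abs_mul, Nat.abs_cast, abs_pow, mul_pow]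
    gcongr
    · exact_mod_cast (Nat.lt_two_pow_self).le
    · calc |y| ^ (m - 1) ≤ R ^ (m - 1) := by gcongr
        _ ≤ R ^ m := pow_le_pow_right₀ hR (Nat.sub_le m 1)
  have h := hasDerivAt_tsum_of_isPreconnected (summable_besselSeries_majorant a (2 * R))
    Metric.isOpen_ball (convex_ball 0 R).isPreconnected
    (fun m y _ => (hasDerivAt_pow m y).div_const _) hderiv_le
    (Metric.mem_ball_self (by linarith)) (summable_besselSeries ha 0)
    (show z ∈ Metric.ball 0 R from mem_ball_zero_iff.2 (by simp [R]))
  rwa [(hasSum_besselSeries_deriv ha z).tsum_eq] at h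

lemma besselSeries_eq_add (ha : 0 < a) (z : ℝ) :
    besselSeries a z = a * besselSeries (a + 1) z + z * besselSeries (a + 2) z := by
  have h := ((summable_besselSeries (by linarith : 0 < a + 1) z).hasSum.mul_left a).add
    ((hasSum_besselSeries_deriv (by linarith : 0 < a + 1) z).mul_left z)
  rw [add_assoc, one_add_one_eq_two] at h
  refine (tsum_congr fun m => ?_).trans h.tsum_eq
  have hpow : z * (m * z ^ (m - 1)) = m * z ^ m := by
    cases m with
    | zero => simp
    | succ m => rw [Nat.add_sub_cancel, pow_succ]; ring
  have hΓ : Gamma (m + (a + 1)) = (m + a) * Gamma (m + a) := by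
    rw [← add_assoc, Gamma_add_one (by positivity)]
  rw [mul_div_assoc', mul_div_assoc', hpow, hΓ]
  have := Gamma_pos_of_pos (by positivity : (0:ℝ) < m + a)
  field_simp
  ring

lemma continuous_besselSeries (ha : 0 < a) : Continuous (besselSeries a) :=
  continuous_iff_continuousAt.2 fun z => (hasDerivAt_besselSeries ha z).continuousAt

lemma hasDerivAt_rpow_mul_besselSeries {z : ℝ} (ha : 0 < a) (hz : 0 < z) :
    HasDerivAt (fun z => z ^ a * besselSeries (a + 1) z) (z ^ (a - 1) * besselSeries a z) z := by
  refine ((Real.hasDerivAt_rpow_const (p := a) (Or.inl hz.ne')).mul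
    (hasDerivAt_besselSeries (by linarith : 0 < a + 1) z)).congr_deriv ?_
  rw [besselSeries_eq_add ha, add_assoc, one_add_one_eq_two, Real.rpow_sub_one hz.ne']
  field_simp


end BesselSeries

/-- The series expansion of `besselIntegral`, from `K_a = π (I_{-a} - I_a) / (2 sin (π a))` and
`Γ(a) Γ(1 - a) = π / sin (π a)`. -/
noncomputable def besselIntegralSeries (a z : ℝ) : ℝ :=
  Gamma a * Gamma (1 - a) * (besselSeries (1 - a) z - z ^ a * besselSeries (a + 1) z)

section BesselIntegralSeries

variable {a : ℝ}

lemma besselIntegralSeries_zero (ha0 : 0 < a) (ha1 : a < 1) :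
    besselIntegralSeries a 0 = Gamma a := by
  have := (Gamma_pos_of_pos (by linarith : 0 < 1 - a)).ne'
  rw [besselIntegralSeries, besselSeries_zero, Real.zero_rpow ha0.ne']
  field_simp
  ring

lemma continuous_besselIntegralSeries (ha0 : 0 < a) (ha1 : a < 1) :
    Continuous (besselIntegralSeries a) :=
  continuous_const.mul ((continuous_besselSeries (by linarith)).sub
    ((Real.continuous_rpow_const ha0.le).mul (continuous_besselSeries (by linarith))))

lemma hasDerivAt_besselIntegralSeries (ha0 : 0 < a) (ha1 : a < 1) {z : ℝ} (hz : 0 < z) :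
    HasDerivAt (besselIntegralSeries a) (-(z ^ (a - 1) * besselIntegralSeries (1 - a) z)) z := by
  refine (((hasDerivAt_besselSeries (by linarith : 0 < 1 - a) z).sub
    (hasDerivAt_rpow_mul_besselSeries ha0 hz)).const_mul (Gamma a * Gamma (1 - a))).congr_deriv ?_
  have hinv : z ^ (a - 1) * z ^ (1 - a) = 1 := by
    rw [← Real.rpow_add hz]; simp
  rw [besselIntegralSeries, sub_sub_cancel, show 1 - a + 1 = 2 - a by ring]
  linear_combination (-(Gamma a * Gamma (1 - a) * besselSeries (2 - a) z)) * hinv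

end BesselIntegralSeries

/-- Substituting `s = 2 t / x` in `besselK` gives
`besselIntegral a (x ^ 2 / 4) = 2 * (x / 2) ^ a * besselK a x`. -/
noncomputable def besselIntegral (a z : ℝ) : ℝ := ∫ t in Ioi 0, t ^ (a - 1) * exp (-t - z / t)

section BesselIntegral

variable {a z : ℝ}

lemma aestronglyMeasurable_rpow_mul_exp_neg_sub_div (b c : ℝ) :
    AEStronglyMeasurable (fun t : ℝ => t ^ b * exp (-t - c / t)) (volume.restrict (Ioi 0)) :=
  (by fun_prop : Measurable fun t : ℝ => t ^ b * exp (-t - c / t)).aestronglyMeasurable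

lemma rpow_mul_exp_neg_sub_div_le {b c t : ℝ} (hc : 0 ≤ c) (ht : 0 < t) :
    t ^ b * exp (-t - c / t) ≤ exp (-t) * t ^ b := by
  rw [mul_comm]
  gcongr
  linarith [div_nonneg hc ht.le]

lemma integrableOn_rpow_mul_exp_neg_sub_div (b : ℝ) {c : ℝ} (hc : 0 < c) :
    IntegrableOn (fun t : ℝ => t ^ b * exp (-t - c / t)) (Ioi 0) := by
  obtain ⟨n, hn⟩ := exists_nat_ge (-b)
  refine ((Real.GammaIntegral_convergent (s := b + n + 1) (by linarith)).const_mul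
    (n ! / c ^ n)).mono' (aestronglyMeasurable_rpow_mul_exp_neg_sub_div b c) ?_
  filter_upwards [ae_restrict_mem measurableSet_Ioi] with t (ht : 0 < t)
  -- `exp (c / t) ≥ (c / t) ^ n / n !` controls the singularity at `0`
  have hexp : exp (-(c / t)) ≤ n ! / c ^ n * t ^ n := by
    have h := Real.pow_div_factorial_le_exp (x := c / t) (by positivity) n
    rw [exp_neg, inv_le_comm₀ (exp_pos _) (by positivity)]
    refine le_trans (le_of_eq ?_) h
    rw [inv_eq_one_div, div_pow]
    field_simp
  rw [Real.norm_of_nonneg (by positivity), show b + n + 1 - 1 = b + n by ring,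
    Real.rpow_add ht, Real.rpow_natCast, sub_eq_add_neg, exp_add]
  calc t ^ b * (exp (-t) * exp (-(c / t))) ≤ t ^ b * (exp (-t) * (n ! / c ^ n * t ^ n)) := by
        gcongr
    _ = n ! / c ^ n * (exp (-t) * (t ^ b * t ^ n)) := by ring

lemma besselIntegral_zero (ha : 0 < a) : besselIntegral a 0 = Gamma a := by
  rw [besselIntegral, Gamma_eq_integral ha]
  refine setIntegral_congr_fun measurableSet_Ioi fun t _ => ?_
  simp [mul_comm]

lemma besselIntegral_nonneg : 0 ≤ besselIntegral a z :=
  setIntegral_nonneg measurableSet_Ioi fun t (ht : 0 < t) => by positivity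

lemma besselIntegral_le_Gamma (ha : 0 < a) (hz : 0 ≤ z) : besselIntegral a z ≤ Gamma a := by
  rw [besselIntegral, Gamma_eq_integral ha]
  refine integral_mono_of_nonneg ?_ (Real.GammaIntegral_convergent ha) ?_ <;>
    filter_upwards [ae_restrict_mem measurableSet_Ioi] with t (ht : 0 < t)
  · positivity
  · exact rpow_mul_exp_neg_sub_div_le hz ht

lemma continuousOn_besselIntegral (ha : 0 < a) : ContinuousOn (besselIntegral a) (Ici 0) := by
  refine continuousOn_of_dominated (fun z _ => aestronglyMeasurable_rpow_mul_exp_neg_sub_div _ z)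
    (fun z (hz : 0 ≤ z) => ?_) (Real.GammaIntegral_convergent ha)
    (.of_forall fun t =>
      (by fun_prop : Continuous fun z => t ^ (a - 1) * exp (-t - z / t)).continuousOn)
  filter_upwards [ae_restrict_mem measurableSet_Ioi] with t (ht : 0 < t)
  rw [Real.norm_of_nonneg (by positivity)]
  exact rpow_mul_exp_neg_sub_div_le hz ht

/-- The substitution `t ↦ z / t`. -/
lemma besselIntegral_neg (hz : 0 < z) :
    besselIntegral (-a) z = z ^ (-a) * besselIntegral a z := by
  have himage : (fun t => z / t) '' Ioi 0 = Ioi 0 := by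
    ext s
    refine ⟨?_, fun hs => ⟨z / s, div_pos hz hs, div_div_cancel₀ hz.ne'⟩⟩
    rintro ⟨t, ht, rfl⟩
    exact div_pos hz ht
  have hderiv : ∀ t ∈ Ioi (0 : ℝ), HasDerivWithinAt (fun t => z / t) (-(z / t ^ 2)) (Ioi 0) t :=
    fun t ht => by
      simpa [div_eq_mul_inv] using ((hasDerivAt_inv (ne_of_gt ht)).const_mul z).hasDerivWithinAt
  have hinj : InjOn (fun t => z / t) (Ioi 0) := fun s _ t _ hst =>
    by simpa [div_eq_mul_inv, hz.ne'] using hst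
  have h := integral_image_eq_integral_abs_deriv_smul measurableSet_Ioi hderiv hinj
    fun s => s ^ (-a - 1) * exp (-s - z / s)
  rw [himage] at h
  rw [besselIntegral, h, besselIntegral, ← integral_const_mul]
  refine setIntegral_congr_fun measurableSet_Ioi fun t (ht : 0 < t) => ?_
  rw [smul_eq_mul, abs_neg, abs_of_pos (by positivity), div_div_cancel₀ hz.ne',
    Real.div_rpow hz.le ht.le, Real.rpow_sub_one hz.ne', Real.rpow_sub_one ht.ne',
    Real.rpow_sub_one ht.ne', Real.rpow_neg ht.le]
  field_simp
  ring_nf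

lemma hasDerivAt_besselIntegral (a : ℝ) (hz : 0 < z) :
    HasDerivAt (besselIntegral a) (-(z ^ (a - 1) * besselIntegral (1 - a) z)) z := by
  have hbound : ∀ᵐ t ∂volume.restrict (Ioi 0), ∀ x ∈ Ioi (z / 2),
      ‖-(t ^ (a - 1 - 1) * exp (-t - x / t))‖ ≤ t ^ (a - 1 - 1) * exp (-t - z / 2 / t) := by
    filter_upwards [ae_restrict_mem measurableSet_Ioi] with t (ht : 0 < t) x (hx : z / 2 < x)
    rw [norm_neg, Real.norm_of_nonneg (by positivity)]
    gcongr
  have hdiff : ∀ᵐ t ∂volume.restrict (Ioi 0), ∀ x ∈ Ioi (z / 2),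
      HasDerivAt (fun x => t ^ (a - 1) * exp (-t - x / t))
        (-(t ^ (a - 1 - 1) * exp (-t - x / t))) x := by
    filter_upwards [ae_restrict_mem measurableSet_Ioi] with t (ht : 0 < t) x _
    refine ((((hasDerivAt_id x).div_const t).const_sub (-t)).exp.const_mul _).congr_deriv ?_
    rw [Real.rpow_sub_one ht.ne' (a - 1)]
    simp only [id]
    ring
  obtain ⟨-, h⟩ := hasDerivAt_integral_of_dominated_loc_of_deriv_le (Ioi_mem_nhds (by linarith))
    (.of_forall fun x => aestronglyMeasurable_rpow_mul_exp_neg_sub_div _ x)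
    (integrableOn_rpow_mul_exp_neg_sub_div _ hz)
    (aestronglyMeasurable_rpow_mul_exp_neg_sub_div _ z).neg hbound
    (integrableOn_rpow_mul_exp_neg_sub_div _ (by linarith)) hdiff
  rw [integral_neg] at h
  refine h.congr_deriv ?_
  change -besselIntegral (a - 1) z = _
  rw [show a - 1 = -(1 - a) by ring, besselIntegral_neg hz]

end BesselIntegral

theorem abs_sub_le_of_abs_hasDerivAt_le {f f' B B' : ℝ → ℝ} {x y : ℝ} (hxy : x ≤ y)
    (hf : ContinuousOn f (Icc x y)) (hB : ContinuousOn B (Icc x y))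
    (hf' : ∀ t ∈ Ioo x y, HasDerivAt f (f' t) t) (hB' : ∀ t ∈ Ioo x y, HasDerivAt B (B' t) t)
    (hbound : ∀ t ∈ Ioo x y, |f' t| ≤ B' t) : |f y - f x| ≤ B y - B x := by
  have hmono : ∀ ε : ℝ, |ε| = 1 → MonotoneOn (fun t => B t - ε * f t) (Icc x y) := by
    intro ε hε
    refine monotoneOn_of_hasDerivWithinAt_nonneg (f' := fun t => B' t - ε * f' t) (convex_Icc x y)
      (hB.sub (hf.const_smul ε)) (fun t ht => ?_) (fun t ht => ?_) <;> rw [interior_Icc] at ht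
    · exact ((hB' t ht).sub ((hf' t ht).const_mul ε)).hasDerivWithinAt
    · have : |ε * f' t| ≤ B' t := by rw [abs_mul, hε, one_mul]; exact hbound t ht
      linarith [le_abs_self (ε * f' t)]
  have hx : x ∈ Icc x y := ⟨le_rfl, hxy⟩
  have hy : y ∈ Icc x y := ⟨hxy, le_rfl⟩
  have h₁ := hmono 1 (by simp) hx hy hxy
  have h₂ := hmono (-1) (by simp) hx hy hxy
  simp only at h₁ h₂
  rw [abs_le]
  constructor <;> linarith

lemma abs_le_of_hasDerivAt_eq_neg_rpow_mul {b M x : ℝ} (hb : 0 < b) (hx : 0 ≤ x) {f g : ℝ → ℝ}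
    (hf : ContinuousOn f (Icc 0 x)) (hf0 : f 0 = 0)
    (hf' : ∀ t ∈ Ioo 0 x, HasDerivAt f (-(t ^ (b - 1) * g t)) t)
    (hg : ∀ t ∈ Ioo 0 x, |g t| ≤ M) : |f x| ≤ M * x ^ b / b := by
  have h := abs_sub_le_of_abs_hasDerivAt_le (B := fun t => M * t ^ b / b)
    (B' := fun t => M * t ^ (b - 1)) hx hf
    ((continuous_const.mul (Real.continuous_rpow_const hb.le)).div_const b).continuousOn hf'
    (fun t ht => ?_) (fun t ht => ?_)
  · simpa [hf0, Real.zero_rpow hb.ne'] using h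
  · refine (((Real.hasDerivAt_rpow_const (Or.inl ht.1.ne')).const_mul M).div_const b).congr_deriv ?_
    field_simp
  · rw [abs_neg, abs_mul, abs_of_pos (Real.rpow_pos_of_pos ht.1 _), mul_comm]
    exact mul_le_mul_of_nonneg_right (hg t ht) (Real.rpow_pos_of_pos ht.1 _).le

section SingularSystem

variable {a : ℝ} {f g : ℝ → ℝ}

lemma eq_zero_of_singular_system_of_small {x₁ : ℝ} (ha0 : 0 < a) (ha1 : a < 1)
    (hf : ContinuousOn f (Icc 0 x₁)) (hg : ContinuousOn g (Icc 0 x₁)) (hf0 : f 0 = 0)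
    (hg0 : g 0 = 0) (hf' : ∀ t ∈ Ioo 0 x₁, HasDerivAt f (-(t ^ (a - 1) * g t)) t)
    (hg' : ∀ t ∈ Ioo 0 x₁, HasDerivAt g (-(t ^ (-a) * f t)) t)
    (hx₁a : x₁ ^ a ≤ a / 2) (hx₁b : x₁ ^ (1 - a) ≤ (1 - a) / 2) :
    ∀ t ∈ Icc 0 x₁, f t = 0 ∧ g t = 0 := by
  intro t ht
  obtain ⟨s, hs, hmax⟩ := isCompact_Icc.exists_isMaxOn ⟨t, ht⟩ (hf.abs.sup hg.abs)
  set M := max |f s| |g s|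
  have hfM : ∀ t ∈ Icc 0 x₁, |f t| ≤ M := fun t ht => (le_max_left _ _).trans (hmax ht)
  have hgM : ∀ t ∈ Icc 0 x₁, |g t| ≤ M := fun t ht => (le_max_right _ _).trans (hmax ht)
  have hM : 0 ≤ M := (abs_nonneg _).trans (hfM t ht)
  -- On `[0, x₁]` the system contracts the sup norm by a factor `1 / 2`.
  have half {b : ℝ} (hb : 0 < b) (hx₁ : x₁ ^ b ≤ b / 2) {F G : ℝ → ℝ}
      (hF : ContinuousOn F (Icc 0 x₁)) (hF0 : F 0 = 0)
      (hF' : ∀ t ∈ Ioo 0 x₁, HasDerivAt F (-(t ^ (b - 1) * G t)) t)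
      (hGM : ∀ t ∈ Icc 0 x₁, |G t| ≤ M) : ∀ t ∈ Icc 0 x₁, |F t| ≤ M / 2 := by
    intro t ht
    calc |F t| ≤ M * t ^ b / b :=
          abs_le_of_hasDerivAt_eq_neg_rpow_mul hb ht.1 (hF.mono (Icc_subset_Icc_right ht.2)) hF0
            (fun u hu => hF' u ⟨hu.1, hu.2.trans_le ht.2⟩)
            (fun u hu => hGM u ⟨hu.1.le, hu.2.le.trans ht.2⟩)
      _ ≤ M * (b / 2) / b := by
          gcongr; exact (Real.rpow_le_rpow ht.1 ht.2 hb.le).trans hx₁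
      _ = M / 2 := by field_simp
  have hf2 := half ha0 hx₁a hf hf0 hf' hgM
  have hg2 := half (b := 1 - a) (by linarith) hx₁b hg hg0
    (fun t ht => by rw [sub_sub_cancel_left]; exact hg' t ht) hfM
  have hM0 : M ≤ 0 := by
    have : M ≤ M / 2 := max_le (hf2 s hs) (hg2 s hs)
    linarith
  exact ⟨abs_nonpos_iff.1 ((hfM t ht).trans hM0), abs_nonpos_iff.1 ((hgM t ht).trans hM0)⟩

lemma eq_zero_of_linear_system {p q : ℝ → ℝ} {K x₁ z : ℝ} (hx₁z : x₁ ≤ z)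
    (hf : ContinuousOn f (Icc x₁ z)) (hg : ContinuousOn g (Icc x₁ z)) (hf₁ : f x₁ = 0)
    (hg₁ : g x₁ = 0) (hf' : ∀ t ∈ Ico x₁ z, HasDerivAt f (p t * g t) t)
    (hg' : ∀ t ∈ Ico x₁ z, HasDerivAt g (q t * f t) t)
    (hp : ∀ t ∈ Ico x₁ z, |p t| ≤ K) (hq : ∀ t ∈ Ico x₁ z, |q t| ≤ K) :
    f z = 0 ∧ g z = 0 := by
  have h := eq_zero_of_abs_deriv_le_mul_abs_self_of_eq_zero_right (K := K)
    (f := fun t => (f t, g t))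
    (hf.prodMk hg) (fun t ht => ((hf' t ht).prodMk (hg' t ht)).hasDerivWithinAt)
    (by simp [hf₁, hg₁]) (fun t ht => ?_) z ⟨hx₁z, le_rfl⟩
  · simpa using h
  · have hK : 0 ≤ K := (abs_nonneg _).trans (hp t ht)
    simp only [Prod.norm_def, Real.norm_eq_abs, abs_mul]
    exact max_le (mul_le_mul (hp t ht) (le_max_right _ _) (abs_nonneg _) hK)
      (mul_le_mul (hq t ht) (le_max_left _ _) (abs_nonneg _) hK)

theorem eq_zero_of_singular_system (ha0 : 0 < a) (ha1 : a < 1) (hf : ContinuousOn f (Ici 0))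
    (hg : ContinuousOn g (Ici 0)) (hf0 : f 0 = 0) (hg0 : g 0 = 0)
    (hf' : ∀ t > 0, HasDerivAt f (-(t ^ (a - 1) * g t)) t)
    (hg' : ∀ t > 0, HasDerivAt g (-(t ^ (-a) * f t)) t) {z : ℝ} (hz : 0 ≤ z) :
    f z = 0 ∧ g z = 0 := by
  have hsmall : ∀ᶠ x in 𝓝[>] 0, x ^ a < a / 2 ∧ x ^ (1 - a) < (1 - a) / 2 := by
    refine nhdsWithin_le_nhds (Filter.Eventually.and ?_ ?_) <;>
      refine ((Real.continuous_rpow_const (by linarith)).tendsto 0).eventually_lt_const ?_ <;>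
      rw [Real.zero_rpow (by linarith)] <;> linarith
  obtain ⟨x₁, ⟨hx₁a, hx₁b⟩, hx₁ : 0 < x₁⟩ := (hsmall.and self_mem_nhdsWithin).exists
  have hnear := eq_zero_of_singular_system_of_small ha0 ha1 (hf.mono Icc_subset_Ici_self)
    (hg.mono Icc_subset_Ici_self) hf0 hg0 (fun t ht => hf' t ht.1) (fun t ht => hg' t ht.1)
    hx₁a.le hx₁b.le
  rcases le_or_gt z x₁ with hzx | hxz
  · exact hnear z ⟨hz, hzx⟩
  obtain ⟨hfx, hgx⟩ := hnear x₁ ⟨hx₁.le, le_rfl⟩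
  have hpos : ∀ t ∈ Ico x₁ z, 0 < t := fun t ht => hx₁.trans_le ht.1
  have hsub : Icc x₁ z ⊆ Ici 0 := fun t ht => hx₁.le.trans ht.1
  -- Away from `0` the coefficients are bounded, so Grönwall's inequality applies.
  refine eq_zero_of_linear_system (p := fun t => -t ^ (a - 1)) (q := fun t => -t ^ (-a))
    (K := x₁ ^ (a - 1) + x₁ ^ (-a)) hxz.le (hf.mono hsub) (hg.mono hsub) hfx hgx
    (fun t ht => by simpa using hf' t (hpos t ht)) (fun t ht => by simpa using hg' t (hpos t ht))
    (fun t ht => ?_) (fun t ht => ?_) <;>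
    rw [abs_neg, abs_of_pos (Real.rpow_pos_of_pos (hpos t ht) _)]
  · linarith [Real.rpow_le_rpow_of_nonpos hx₁ ht.1 (by linarith : a - 1 ≤ 0),
      Real.rpow_pos_of_pos hx₁ (-a)]
  · linarith [Real.rpow_le_rpow_of_nonpos hx₁ ht.1 (by linarith : -a ≤ 0),
      Real.rpow_pos_of_pos hx₁ (a - 1)]

end SingularSystem

theorem besselIntegral_eq_besselIntegralSeries {a z : ℝ} (ha0 : 0 < a) (ha1 : a < 1)
    (hz : 0 ≤ z) : besselIntegral a z = besselIntegralSeries a z := by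
  have hcont {b : ℝ} (hb0 : 0 < b) (hb1 : b < 1) :
      ContinuousOn (fun z => besselIntegral b z - besselIntegralSeries b z) (Ici 0) :=
    (continuousOn_besselIntegral hb0).sub (continuous_besselIntegralSeries hb0 hb1).continuousOn
  have hzero {b : ℝ} (hb0 : 0 < b) (hb1 : b < 1) :
      besselIntegral b 0 - besselIntegralSeries b 0 = 0 := by
    rw [besselIntegral_zero hb0, besselIntegralSeries_zero hb0 hb1, sub_self]
  have hderiv {b : ℝ} (hb0 : 0 < b) (hb1 : b < 1) (t : ℝ) (ht : 0 < t) :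
      HasDerivAt (fun z => besselIntegral b z - besselIntegralSeries b z)
        (-(t ^ (b - 1) * (besselIntegral (1 - b) t - besselIntegralSeries (1 - b) t))) t :=
    ((hasDerivAt_besselIntegral b ht).sub (hasDerivAt_besselIntegralSeries hb0 hb1 ht)).congr_deriv
      (by ring)
  have ha0' : 0 < 1 - a := by linarith
  have ha1' : 1 - a < 1 := by linarith
  have h := eq_zero_of_singular_system ha0 ha1 (hcont ha0 ha1) (hcont ha0' ha1') (hzero ha0 ha1)
    (hzero ha0' ha1') (hderiv ha0 ha1)
    (fun t ht => by simpa [sub_sub_cancel_left] using hderiv ha0' ha1' t ht) hz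
  exact sub_eq_zero.1 h.1

lemma theta_eq_one_sub_besselIntegralSeries {k u : ℝ} (hk0 : -1 < k) (hk1 : k < 1) (hu : 0 ≤ u) :
    theta k u = 1 - besselIntegralSeries ((1 - k) / 2) ((u / 2) ^ 2) / Gamma ((1 - k) / 2) := by
  set ν := (1 - k) / 2 with hν
  set z := (u / 2) ^ 2
  have hw : 0 ≤ u / 2 := by positivity
  have hpow (m : ℕ) : (u / 2) ^ (2 * ((m : ℝ) + 1)) = z ^ (m + 1) := by
    rw [show 2 * ((m : ℝ) + 1) = ((2 * (m + 1) : ℕ) : ℝ) by push_cast; ring, Real.rpow_natCast,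
      pow_mul]
  have hzν : (u / 2) ^ (1 - k) = z ^ ν := by
    rw [show z = (u / 2) ^ ((2 : ℕ) : ℝ) from (Real.rpow_natCast _ 2).symm, ← Real.rpow_mul hw]
    congr 1
    push_cast
    ring
  have hA : (2 : ℝ) ^ (k - 1) * u ^ (1 - k) / Gamma ((3 - k) / 2) = z ^ ν / Gamma (ν + 1) := by
    rw [show u = 2 * (u / 2) by ring, Real.mul_rpow zero_le_two hw, ← mul_assoc,
      ← Real.rpow_add zero_lt_two, show k - 1 + (1 - k) = 0 by ring, Real.rpow_zero, one_mul,
      hzν, show (3 - k) / 2 = ν + 1 by ring]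
  have hS₁ : ∑' m : ℕ, (u / 2) ^ (2 * ((m : ℝ) + 1) - k + 1) /
      ((m + 1)! * Gamma ((m : ℝ) + 1 + (3 - k) / 2))
      = z ^ ν * (besselSeries (ν + 1) z - (Gamma (ν + 1))⁻¹) := by
    rw [besselSeries_sub_inv_Gamma (by linarith), ← tsum_mul_left]
    refine tsum_congr fun m => ?_
    rw [show 2 * ((m : ℝ) + 1) - k + 1 = (1 - k) + 2 * ((m : ℝ) + 1) by ring,
      Real.rpow_add' hw (by positivity), hzν, hpow, show (3 - k) / 2 = ν + 1 by ring, mul_div_assoc]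
  have hS₂ : ∑' m : ℕ, (u / 2) ^ (2 * ((m : ℝ) + 1)) /
      ((m + 1)! * Gamma ((m : ℝ) + 1 + (k + 1) / 2))
      = besselSeries (1 - ν) z - (Gamma (1 - ν))⁻¹ := by
    rw [besselSeries_sub_inv_Gamma (by linarith)]
    refine tsum_congr fun m => ?_
    rw [hpow, show (k + 1) / 2 = 1 - ν by ring]
  have hΓν := (Gamma_pos_of_pos (by linarith : 0 < ν)).ne'
  have hΓν' := (Gamma_pos_of_pos (by linarith : 0 < ν + 1)).ne'
  have hΓν'' := (Gamma_pos_of_pos (by linarith : 0 < 1 - ν)).ne'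
  rw [theta, hA, hS₁, hS₂, show (k + 1) / 2 = 1 - ν by ring, besselIntegralSeries]
  field_simp
  ring

theorem theta_mem_Icc {k u : ℝ} (hk0 : -1 < k) (hk1 : k < 1) (hu : 0 ≤ u) :
    theta k u ∈ Icc 0 1 := by
  have hν : 0 < (1 - k) / 2 := by linarith
  have hz : 0 ≤ (u / 2) ^ 2 := by positivity
  rw [theta_eq_one_sub_besselIntegralSeries hk0 hk1 hu,
    ← besselIntegral_eq_besselIntegralSeries hν (by linarith) hz]
  have hΓ := Gamma_pos_of_pos hν
  constructor
  · linarith [(div_le_one hΓ).2 (besselIntegral_le_Gamma hν hz)]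
  · linarith [div_nonneg (besselIntegral_nonneg (a := (1 - k) / 2) (z := (u / 2) ^ 2)) hΓ.le]

theorem lemma1_theta_bounded (k : ℝ) (hk0 : 0 < k) (hk1 : k < 1) :
    ∃ M : ℝ, 0 < M ∧ ∀ u : ℝ, 0 ≤ u → |theta k u| ≤ M := by
  refine ⟨1, one_pos, fun u hu => ?_⟩
  obtain ⟨h0, h1⟩ := theta_mem_Icc (by linarith) hk1 hu
  exact abs_le.2 ⟨by linarith, h1⟩
end

section
/- For every 0 < κ < 1 and w ≠ 0, the spectral density f_{κ,w} is continuous on ℝ ∖ {−w, w}, and it has power-law singularities of order 1−κ at ±w: lim_{λ→w} |λ−w|^{1−κ}·f_{κ,w}(λ) = c₂(κ)/2 and lim_{λ→−w} |λ+w|^{1−κ}·f_{κ,w}(λ) = c₂(κ)/2. (Content of Remark 6 following Lemma 1.) -/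
open Real MeasureTheory Filter

/-- The spectral density `f_{κ,w}` of the covariance `cos(wx)/(1+x²)^{κ/2}`. -/
noncomputable def specDen (k w lam : ℝ) : ℝ :=
  (c1 k / 2) * (besselK ((k-1)/2) |lam + w| * |lam + w| ^ ((k-1)/2)
    + besselK ((k-1)/2) |lam - w| * |lam - w| ^ ((k-1)/2))

/-!
Substituting `s = z / (2t)` in the defining integral gives
`K_ν(z) = ½ (z/2)^ν ∫₀^∞ t^(-ν-1) exp(-t - z²/(4t)) dt`. For `ν = (κ-1)/2 < 0` this integral is
dominated by the Gamma integrand `t^(-ν-1) e^(-t)`, so it is continuous in `z ∈ ℝ` and equals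
`Γ(-ν)` at `z = 0`. Hence `K_ν(|x|) |x|^ν = 2^(-ν-1) |x|^(κ-1) · (continuous function)` is
continuous off `0`, and `|x|^(1-κ) K_ν(|x|) |x|^ν → 2^(-ν-1) Γ(-ν)`; near `λ = ±w` the other
summand of `f_{κ,w}` stays bounded, so the factor `|λ ∓ w|^(1-κ)` kills it. The duplication and
reflection formulas for `Γ` turn `(c₁/2) 2^(-ν-1) Γ(-ν)` into `c₂/2`.
-/

open Set Topology

theorem integral_comp_inv_Ioi {E : Type*} [NormedAddCommGroup E] [NormedSpace ℝ E] (g : ℝ → E) :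
    ∫ x in Ioi (0 : ℝ), (x ^ 2)⁻¹ • g x⁻¹ = ∫ y in Ioi (0 : ℝ), g y := by
  rw [← integral_comp_rpow_Ioi g (p := -1) (by norm_num)]
  refine setIntegral_congr_fun measurableSet_Ioi fun x (hx : 0 < x) => ?_
  rw [rpow_neg_one, show (-1 : ℝ) - 1 = -(2 : ℕ) by norm_num, rpow_neg hx.le, rpow_natCast]
  simp

noncomputable def gammaKernelIntegral (μ z : ℝ) : ℝ :=
  ∫ t in Ioi (0 : ℝ), t ^ (μ - 1) * exp (-t - z ^ 2 / (4 * t))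

theorem besselK_eq_gammaKernelIntegral {ν z : ℝ} (hz : 0 < z) :
    besselK ν z = (z / 2) ^ ν / 2 * gammaKernelIntegral (-ν) z := by
  have hc : 0 < z / 2 := by positivity
  have hscale := integral_comp_mul_left_Ioi'
    (fun s : ℝ => s ^ (ν - 1) * exp (-(z / 2) * (s + 1 / s))) 0 hc
  rw [mul_zero] at hscale
  rw [besselK, ← hscale, ← integral_comp_inv_Ioi, gammaKernelIntegral, smul_eq_mul,
    ← integral_const_mul, ← integral_const_mul, ← integral_const_mul]
  refine setIntegral_congr_fun measurableSet_Ioi fun t (ht : 0 < t) => ?_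
  have hinv : (z / 2 * t⁻¹) ^ (ν - 1) = (z / 2) ^ (ν - 1) * t ^ (1 - ν) := by
    rw [mul_rpow hc.le (inv_pos.2 ht).le, inv_rpow ht.le, ← rpow_neg ht.le, neg_sub]
  have hpow : (t ^ 2)⁻¹ * t ^ (1 - ν) = t ^ (-ν - 1) := by
    rw [← rpow_natCast, ← rpow_neg ht.le, ← rpow_add ht]
    congr 1
    push_cast
    ring
  have hexp : -(z / 2) * (z / 2 * t⁻¹ + 1 / (z / 2 * t⁻¹)) = -t - z ^ 2 / (4 * t) := by
    field_simp; ring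
  have hc' : z / 2 * (z / 2) ^ (ν - 1) = (z / 2) ^ ν := by
    rw [mul_comm, ← rpow_add_one hc.ne', sub_add_cancel]
  rw [smul_eq_mul, hinv, hexp, ← hpow, ← hc']
  ring

theorem continuous_gammaKernelIntegral {μ : ℝ} (hμ : 0 < μ) :
    Continuous (gammaKernelIntegral μ) := by
  refine continuous_of_dominated (bound := fun t => t ^ (μ - 1) * exp (-t))
    (fun z => by fun_prop) (fun z => ?_) ?_ (ae_of_all _ fun t => by fun_prop)
  · refine (ae_restrict_iff' measurableSet_Ioi).2 (ae_of_all _ fun t (ht : 0 < t) => ?_)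
    rw [norm_mul, norm_of_nonneg (rpow_nonneg ht.le _), norm_of_nonneg (exp_nonneg _)]
    gcongr
    have : 0 ≤ z ^ 2 / (4 * t) := by positivity
    linarith
  · exact (by simpa only [mul_comm] using GammaIntegral_convergent hμ :
      IntegrableOn (fun t : ℝ => t ^ (μ - 1) * exp (-t)) (Ioi 0))

theorem gammaKernelIntegral_zero {μ : ℝ} (hμ : 0 < μ) : gammaKernelIntegral μ 0 = Gamma μ := by
  rw [Gamma_eq_integral hμ, gammaKernelIntegral]
  refine setIntegral_congr_fun measurableSet_Ioi fun t _ => ?_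
  simp [mul_comm]

noncomputable def besselTerm (ν x : ℝ) : ℝ := besselK ν |x| * |x| ^ ν

theorem specDen_eq_besselTerm (k w lam : ℝ) :
    specDen k w lam = c1 k / 2 * (besselTerm ((k - 1) / 2) (lam + w)
      + besselTerm ((k - 1) / 2) (lam - w)) := rfl

theorem besselTerm_eq {ν x : ℝ} (hx : x ≠ 0) :
    besselTerm ν x = 2 ^ (-ν) / 2 * |x| ^ (2 * ν) * gammaKernelIntegral (-ν) |x| := by
  have hx' : 0 < |x| := abs_pos.2 hx
  rw [besselTerm, besselK_eq_gammaKernelIntegral hx', div_rpow hx'.le zero_le_two,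
    rpow_neg zero_le_two, two_mul, rpow_add hx']
  ring

theorem continuousAt_besselTerm {ν x : ℝ} (hν : ν < 0) (hx : x ≠ 0) :
    ContinuousAt (besselTerm ν) x := by
  have hG : ContinuousAt (fun y : ℝ => 2 ^ (-ν) / 2 * |y| ^ (2 * ν)
      * gammaKernelIntegral (-ν) |y|) x := by
    have hG := continuous_gammaKernelIntegral (neg_pos.2 hν)
    have hpow := (continuousAt_rpow_const _ (2 * ν) (Or.inl (abs_ne_zero.2 hx))).comp
      continuous_abs.continuousAt
    fun_prop
  refine hG.congr ?_
  filter_upwards [eventually_ne_nhds hx] with y hy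
  exact (besselTerm_eq hy).symm

theorem tendsto_abs_rpow_mul_besselTerm {ν : ℝ} (hν : ν < 0) :
    Tendsto (fun x => |x| ^ (-(2 * ν)) * besselTerm ν x) (𝓝[≠] 0)
      (𝓝 (2 ^ (-ν) / 2 * Gamma (-ν))) := by
  have hG : Tendsto (fun x : ℝ => 2 ^ (-ν) / 2 * gammaKernelIntegral (-ν) |x|) (𝓝 0)
      (𝓝 (2 ^ (-ν) / 2 * Gamma (-ν))) := by
    have := ((continuous_gammaKernelIntegral (neg_pos.2 hν)).comp continuous_abs).tendsto 0
    simpa [Function.comp_def, gammaKernelIntegral_zero (neg_pos.2 hν)] using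
      this.const_mul (2 ^ (-ν) / 2)
  refine (hG.mono_left nhdsWithin_le_nhds).congr' ?_
  filter_upwards [self_mem_nhdsWithin] with x (hx : x ≠ 0)
  have hx' : 0 < |x| := abs_pos.2 hx
  rw [besselTerm_eq hx, ← mul_assoc, mul_comm (|x| ^ _), mul_assoc (2 ^ (-ν) / 2),
    ← rpow_add hx', add_neg_cancel, rpow_zero, mul_one]

theorem tendsto_abs_rpow_mul_besselTerm_add {ν d : ℝ} (hν : ν < 0) (hd : d ≠ 0) :
    Tendsto (fun x => |x| ^ (-(2 * ν)) * (besselTerm ν (x + d) + besselTerm ν x)) (𝓝[≠] 0)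
      (𝓝 (2 ^ (-ν) / 2 * Gamma (-ν))) := by
  have hvanish : Tendsto (fun x => |x| ^ (-(2 * ν)) * besselTerm ν (x + d)) (𝓝 0) (𝓝 0) := by
    have hpow : ContinuousAt (fun x : ℝ => |x| ^ (-(2 * ν))) 0 :=
      (continuousAt_rpow_const _ _ (Or.inr (by linarith))).comp continuous_abs.continuousAt
    have hshift : ContinuousAt (fun x => besselTerm ν (x + d)) 0 :=
      (continuousAt_besselTerm hν (by simpa using hd)).comp (by fun_prop)
    simpa [zero_rpow (show -(2 * ν) ≠ 0 by linarith)] using hpow.tendsto.mul hshift.tendsto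
  simpa only [mul_add, zero_add] using
    (hvanish.mono_left nhdsWithin_le_nhds).add (tendsto_abs_rpow_mul_besselTerm hν)

theorem c1_mul_two_rpow_mul_Gamma {k : ℝ} (hk0 : 0 < k) (hk1 : k < 1) :
    c1 k * (2 ^ ((1 - k) / 2) * Gamma ((1 - k) / 2)) = 2 * c2 k := by
  have hcos : 0 < cos (k * π / 2) :=
    cos_pos_of_mem_Ioo ⟨by nlinarith [pi_pos], by nlinarith [pi_pos]⟩
  have hpow : (2 : ℝ) ^ (1 - k) = 2 ^ ((1 - k) / 2) * 2 ^ ((1 - k) / 2) := by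
    rw [← rpow_add two_pos]; ring_nf
  have hsqrt : √π * √π = π := mul_self_sqrt pi_pos.le
  have hlegendre : Gamma k = Gamma (k / 2) * Gamma ((k + 1) / 2) / (2 ^ (1 - k) * √π) := by
    have h := Gamma_mul_Gamma_add_half (k / 2)
    rw [show 2 * (k / 2) = k by ring, show k / 2 + 1 / 2 = (k + 1) / 2 by ring] at h
    rw [h]; field_simp
  have hreflect : Gamma ((1 - k) / 2) = π / (cos (k * π / 2) * Gamma ((k + 1) / 2)) := by
    have h := Gamma_mul_Gamma_one_sub ((1 - k) / 2)
    rw [show 1 - (1 - k) / 2 = (k + 1) / 2 by ring,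
      show π * ((1 - k) / 2) = π / 2 - k * π / 2 by ring, sin_pi_div_two_sub] at h
    rw [eq_div_iff (by positivity), ← mul_assoc, mul_right_comm, h, div_mul_cancel₀ _ hcos.ne']
  rw [c1, c2, hlegendre, hreflect, hpow]
  field_simp
  linear_combination -hsqrt

theorem continuousAt_specDen {k w lam : ℝ} (hk1 : k < 1) (hplus : lam + w ≠ 0)
    (hminus : lam - w ≠ 0) : ContinuousAt (specDen k w) lam := by
  have hν : (k - 1) / 2 < 0 := by linarith
  have hplus' : ContinuousAt (fun x => besselTerm ((k - 1) / 2) (x + w)) lam :=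
    (continuousAt_besselTerm hν hplus).comp (f := (· + w)) (by fun_prop)
  have hminus' : ContinuousAt (fun x => besselTerm ((k - 1) / 2) (x - w)) lam :=
    (continuousAt_besselTerm hν hminus).comp (f := (· - w)) (by fun_prop)
  exact continuousAt_const.mul (hplus'.add hminus')

theorem tendsto_abs_sub_rpow_mul_c1_mul_besselTerm_add {k d : ℝ} (hk0 : 0 < k) (hk1 : k < 1)
    (hd : d ≠ 0) (a : ℝ) :
    Tendsto (fun lam => |lam - a| ^ (1 - k) * (c1 k / 2 *
        (besselTerm ((k - 1) / 2) (lam - a + d) + besselTerm ((k - 1) / 2) (lam - a))))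
      (𝓝[≠] a) (𝓝 (c2 k / 2)) := by
  have hlim := (tendsto_abs_rpow_mul_besselTerm_add (by linarith : (k - 1) / 2 < 0) hd).const_mul
    (c1 k / 2)
  have hconst : c1 k / 2 * (2 ^ (-((k - 1) / 2)) / 2 * Gamma (-((k - 1) / 2))) = c2 k / 2 := by
    rw [show -((k - 1) / 2) = (1 - k) / 2 by ring]
    linear_combination c1_mul_two_rpow_mul_Gamma hk0 hk1 / 4
  have hshift : Tendsto (· - a) (𝓝[≠] a) (𝓝[≠] 0) := by
    have h := (map_subRight_nhdsNE (c := a) (a := a)).le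
    rwa [sub_self] at h
  rw [hconst] at hlim
  refine (hlim.comp hshift).congr fun lam => ?_
  simp only [Function.comp_apply, show -(2 * ((k - 1) / 2)) = 1 - k by ring]
  ring

theorem spectral_density_singularities (k w : ℝ) (hk0 : 0 < k) (hk1 : k < 1) (hw : w ≠ 0) :
    ContinuousOn (specDen k w) ({-w, w} : Set ℝ)ᶜ
    ∧ Filter.Tendsto (fun lam : ℝ => |lam - w| ^ (1-k) * specDen k w lam)
        (nhdsWithin w {w}ᶜ) (nhds (c2 k / 2))
    ∧ Filter.Tendsto (fun lam : ℝ => |lam + w| ^ (1-k) * specDen k w lam)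
        (nhdsWithin (-w) {-w}ᶜ) (nhds (c2 k / 2)) := by
  refine ⟨fun lam hlam => ?_, ?_, ?_⟩
  · simp only [mem_compl_iff, mem_insert_iff, mem_singleton_iff, not_or] at hlam
    refine (continuousAt_specDen hk1 ?_ (sub_ne_zero.2 hlam.2)).continuousWithinAt
    rw [← sub_neg_eq_add]
    exact sub_ne_zero.2 hlam.1
  · refine (tendsto_abs_sub_rpow_mul_c1_mul_besselTerm_add hk0 hk1 (d := 2 * w)
      (by simpa using hw) w).congr fun lam => ?_
    rw [specDen_eq_besselTerm, show lam - w + 2 * w = lam + w by ring]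
  · refine (tendsto_abs_sub_rpow_mul_c1_mul_besselTerm_add hk0 hk1 (d := -(2 * w))
      (by simpa using hw) (-w)).congr fun lam => ?_
    rw [specDen_eq_besselTerm, sub_neg_eq_add, show lam + w + -(2 * w) = lam - w by ring,
      add_comm (besselTerm _ (lam - w))]
end

section
/- Let 0 < β < 1, 0 < α ≤ 1, μ > 0 and t > 0. Assume the known lower bound E_β(−u) ≥ 1/(1+Γ(1−β)u) for all u ≥ 0. Then the function λ ↦ E_β(−μ t^β |λ|^α) is NOT Lebesgue integrable on ℝ. (The necessity part of the condition α > 1 in Theorem 4: the lower bound in the Mittag-Leffler inequality shows α > 1 is necessary for the finiteness of the variance integral.) -/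
open Real MeasureTheory Filter Set

/-- The Mittag-Leffler function `E_β(z) = Σ_{k≥0} z^k / Γ(βk+1)` (real argument). -/
noncomputable def mittagLeffler (b z : ℝ) : ℝ := ∑' k : ℕ, z ^ k / Real.Gamma (b * k + 1)

theorem mittagLeffler_not_integrable (b α μ t : ℝ)
    (hb0 : 0 < b) (hb1 : b < 1) (hα0 : 0 < α) (hα1 : α ≤ 1) (hμ : 0 < μ) (ht : 0 < t)
    (hlow : ∀ u : ℝ, 0 ≤ u → 1 / (1 + Real.Gamma (1-b) * u) ≤ mittagLeffler b (-u)) :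
    ¬ Integrable (fun lam : ℝ => mittagLeffler b (-(μ * t ^ b * |lam| ^ α))) := by
  intro hint
  set C : ℝ := Real.Gamma (1 - b) * (μ * t ^ b) with hC
  have hG : 0 < Real.Gamma (1 - b) := Real.Gamma_pos_of_pos (by linarith)
  have htb : 0 < t ^ b := Real.rpow_pos_of_pos ht b
  have hCpos : 0 < C := by positivity
  -- the integrand is bounded below on Ioi 1 by (1+C)⁻¹ * x^(-α)
  have hintOn : IntegrableOn (fun lam : ℝ => mittagLeffler b (-(μ * t ^ b * |lam| ^ α)))
      (Ioi (1:ℝ)) := hint.integrableOn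
  have hg : IntegrableOn (fun x : ℝ => (1 + C)⁻¹ * x ^ (-α)) (Ioi (1:ℝ)) := by
    refine hintOn.mono' ?_ ?_
    · exact (Measurable.aestronglyMeasurable (by measurability))
    · filter_upwards [ae_restrict_mem measurableSet_Ioi] with x hx
      have hx1 : (1:ℝ) < x := hx
      have hx0 : 0 < x := by linarith
      have hxa1 : (1:ℝ) ≤ x ^ α := Real.one_le_rpow hx1.le hα0.le
      have habs : |x| = x := abs_of_pos hx0
      have hu : 0 ≤ μ * t ^ b * |x| ^ α := by positivity
      have hlb := hlow (μ * t ^ b * |x| ^ α) hu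
      have key : (1 + C)⁻¹ * x ^ (-α) ≤
          1 / (1 + Real.Gamma (1 - b) * (μ * t ^ b * |x| ^ α)) := by
        rw [habs]
        have h1 : 1 + Real.Gamma (1 - b) * (μ * t ^ b * x ^ α) ≤ (1 + C) * x ^ α := by
          have : Real.Gamma (1 - b) * (μ * t ^ b * x ^ α) = C * x ^ α := by ring
          rw [this, add_mul]
          have : C * x ^ α ≤ C * x ^ α := le_refl _
          nlinarith
        have hpos1 : 0 < 1 + Real.Gamma (1 - b) * (μ * t ^ b * x ^ α) := by positivity
        have hpos2 : 0 < (1 + C) * x ^ α := by positivity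
        rw [Real.rpow_neg hx0.le, ← one_div, ← one_div, div_mul_div_comm, one_mul]
        exact one_div_le_one_div_of_le hpos1 h1
      have hnn : 0 ≤ (1 + C)⁻¹ * x ^ (-α) := by positivity
      have := key.trans hlb
      calc ‖(1 + C)⁻¹ * x ^ (-α)‖ = (1 + C)⁻¹ * x ^ (-α) := Real.norm_of_nonneg hnn
        _ ≤ mittagLeffler b (-(μ * t ^ b * |x| ^ α)) := this
  have hg2 : IntegrableOn (fun x : ℝ => x ^ (-α)) (Ioi (1:ℝ)) := by
    have := hg.const_mul (1 + C)
    refine (integrable_congr ?_).mp this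
    filter_upwards with x
    field_simp
  rw [integrableOn_Ioi_rpow_iff one_pos] at hg2
  linarith
end
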